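/- arXiv:2302.00199 — 5 statements merged into one kernel-verified Lean document; each statement's English description precedes it below -/
import Mathlib

section
/- Every finite simple graph can be decomposed into K₁ and K₂ over the field F₂ = ZMod 2; that is, for every finite simple graph X there exist nonnegative integers n₁ and n₂ and an invertible matrix P over F₂ such that Pᵀ · A(X) · P equals the block-diagonal direct sum of n₁ copies of the 1×1 zero matrix and n₂ copies of the adjacency matrix of K₂, where A(X) is the adjacency matrix of X with entries read in F₂. -/
open Matrix

/-- Congruence ("similarity" in the paper) of square matrices over possibly different
(finite) index types: `N = Pᵀ * M * P` for some invertible `P`. -/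
def MatCongruent {k : Type*} [CommRing k] {m n : Type*} [Fintype m] [Fintype n]
    [DecidableEq m] [DecidableEq n] (M : Matrix m m k) (N : Matrix n n k) : Prop :=
  ∃ (P : Matrix m n k) (Q : Matrix n m k), P * Q = 1 ∧ Q * P = 1 ∧ N = Pᵀ * M * P

/-- `c` diagonal copies of a square matrix `A`. -/
def copies {k : Type*} [Zero k] {m : Type*} (c : ℕ) (A : Matrix m m k) :
    Matrix (m × Fin c) (m × Fin c) k :=
  Matrix.blockDiagonal fun _ => A

/-- Block-diagonal direct sum of two square matrices. -/
def dsum {k : Type*} [Zero k] {m n : Type*} (A : Matrix m m k) (B : Matrix n n k) :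
    Matrix (m ⊕ n) (m ⊕ n) k :=
  Matrix.fromBlocks A 0 0 B

/-- Adjacency matrix of the complete graph `Kₙ` (for `n = 1` this is the `1 × 1`
zero matrix, the adjacency matrix of `K₁`). -/
def Kmat (k : Type*) [Zero k] [One k] (n : ℕ) : Matrix (Fin n) (Fin n) k :=
  (⊤ : SimpleGraph (Fin n)).adjMatrix k

/-!
Over `𝔽₂` a symmetric matrix with zero diagonal is alternating, and over any field an alternating
matrix is congruent to a direct sum of zero blocks and copies of `J = !![0, 1; -1, 0]`. Indeed a
nonzero entry `a = A i j` lies off the diagonal, so moving `i, j` to the front exhibits the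
invertible pivot block `a • J`; block elimination by a unipotent congruence splits it off, the
Schur complement left over is again alternating, and rescaling turns `a • J` into `J`. Over `𝔽₂`
the matrix `J` is the adjacency matrix of `K₂`.
-/

namespace MatCongruent

variable {k : Type*} [CommRing k] {l m n o : Type*} [Fintype l] [Fintype m] [Fintype n]
  [Fintype o] [DecidableEq l] [DecidableEq m] [DecidableEq n] [DecidableEq o]

theorem refl (A : Matrix m m k) : MatCongruent A A :=
  ⟨1, 1, by simp, by simp, by simp⟩

theorem symm {A : Matrix m m k} {B : Matrix n n k} (h : MatCongruent A B) :
    MatCongruent B A := by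
  obtain ⟨P, Q, hPQ, hQP, rfl⟩ := h
  refine ⟨Q, P, hQP, hPQ, ?_⟩
  rw [show Qᵀ * (Pᵀ * A * P) * Q = (P * Q)ᵀ * A * (P * Q) by
    simp only [transpose_mul, Matrix.mul_assoc], hPQ, transpose_one, Matrix.one_mul,
    Matrix.mul_one]

theorem trans {A : Matrix m m k} {B : Matrix n n k} {C : Matrix o o k}
    (h₁ : MatCongruent A B) (h₂ : MatCongruent B C) : MatCongruent A C := by
  obtain ⟨P₁, Q₁, h₁₁, h₁₂, rfl⟩ := h₁
  obtain ⟨P₂, Q₂, h₂₁, h₂₂, rfl⟩ := h₂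
  refine ⟨P₁ * P₂, Q₂ * Q₁, ?_, ?_, ?_⟩
  · rw [Matrix.mul_assoc, ← Matrix.mul_assoc P₂, h₂₁, Matrix.one_mul, h₁₁]
  · rw [Matrix.mul_assoc, ← Matrix.mul_assoc Q₁, h₁₂, Matrix.one_mul, h₂₂]
  · simp only [transpose_mul, Matrix.mul_assoc]

theorem of_submatrix (A : Matrix m m k) (e : n ≃ m) : MatCongruent A (A.submatrix e e) :=
  ⟨(1 : Matrix n n k).submatrix e.symm id, (1 : Matrix n n k).submatrix id e.symm,
    by ext; simp [mul_apply, one_apply], by simp,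
    by simp [transpose_submatrix, one_submatrix_mul, mul_submatrix_one]⟩

theorem of_submatrix_eq {A : Matrix m m k} {B : Matrix n n k} (e : n ≃ m)
    (h : A.submatrix e e = B) : MatCongruent A B :=
  h ▸ of_submatrix A e

theorem dsum_congr {A : Matrix m m k} {A' : Matrix n n k} {B : Matrix l l k}
    {B' : Matrix o o k} (hA : MatCongruent A A') (hB : MatCongruent B B') :
    MatCongruent (dsum A B) (dsum A' B') := by
  obtain ⟨P₁, Q₁, h₁₁, h₁₂, rfl⟩ := hA
  obtain ⟨P₂, Q₂, h₂₁, h₂₂, rfl⟩ := hB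
  refine ⟨fromBlocks P₁ 0 0 P₂, fromBlocks Q₁ 0 0 Q₂, ?_, ?_, ?_⟩ <;>
    simp [dsum, fromBlocks_multiply, fromBlocks_transpose, *]

theorem dsum_left_comm (A : Matrix m m k) (B : Matrix n n k) (C : Matrix o o k) :
    MatCongruent (dsum A (dsum B C)) (dsum B (dsum A C)) := by
  refine of_submatrix_eq ((Equiv.sumAssoc n m o).symm.trans
    (((Equiv.sumComm n m).sumCongr (Equiv.refl o)).trans (Equiv.sumAssoc m n o))) ?_
  ext (i | i | i) (j | j | j) <;> simp [dsum]

theorem dsum_copies_succ (A : Matrix m m k) (c : ℕ) :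
    MatCongruent (dsum A (copies c A)) (copies (c + 1) A) := by
  refine of_submatrix_eq ((Equiv.prodComm _ _).trans
    (((finSuccEquiv c).prodCongr (Equiv.refl m)).trans
      (optionProdEquiv.trans ((Equiv.refl m).sumCongr (Equiv.prodComm _ _))))) ?_
  ext ⟨x, i⟩ ⟨y, j⟩
  cases i using Fin.cases <;> cases j using Fin.cases <;>
    simp [copies, dsum, blockDiagonal_apply, eq_comm (a := (0 : Fin _))]

theorem zero_of_card_eq (h : Fintype.card n = Fintype.card m) :
    MatCongruent (0 : Matrix m m k) (0 : Matrix n n k) :=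
  of_submatrix_eq (Fintype.equivOfCardEq h) (by simp)

end MatCongruent

/-- The diagonal condition is not implied by `Aᵀ = -A` in characteristic `2`. -/
structure Matrix.IsAlt {k m : Type*} [Neg k] [Zero k] (A : Matrix m m k) : Prop where
  transpose_eq_neg : Aᵀ = -A
  apply_self : ∀ i, A i i = 0

theorem SimpleGraph.isAlt_adjMatrix {k V : Type*} [Ring k] [CharP k 2]
    (G : SimpleGraph V) [DecidableRel G.Adj] : IsAlt (G.adjMatrix k) :=
  ⟨by rw [transpose_adjMatrix]; ext; rw [neg_apply, CharTwo.neg_eq], fun _ => by simp⟩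

namespace Matrix.IsAlt

variable {k m n : Type*}

theorem apply_comm [Neg k] [Zero k] {A : Matrix m m k} (hA : IsAlt A) (i j : m) :
    A i j = -A j i := by
  rw [← transpose_apply A, hA.transpose_eq_neg, neg_apply]

theorem submatrix [Neg k] [Zero k] {A : Matrix m m k} (hA : IsAlt A) (e : n → m) :
    IsAlt (A.submatrix e e) :=
  ⟨by rw [transpose_submatrix, hA.transpose_eq_neg]; rfl, fun i => hA.apply_self (e i)⟩

theorem add [AddCommGroup k] {A B : Matrix m m k} (hA : IsAlt A) (hB : IsAlt B) :
    IsAlt (A + B) :=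
  ⟨by rw [transpose_add, hA.transpose_eq_neg, hB.transpose_eq_neg, neg_add],
    fun i => by simp [hA.apply_self, hB.apply_self]⟩

theorem smul [Ring k] {A : Matrix m m k} (hA : IsAlt A) (c : k) :
    IsAlt (c • A) :=
  ⟨by rw [transpose_smul, hA.transpose_eq_neg, smul_neg], fun i => by simp [hA.apply_self]⟩

end Matrix.IsAlt

def symplecticPlane (k : Type*) [Zero k] [One k] [Neg k] : Matrix (Fin 2) (Fin 2) k :=
  !![0, 1; -1, 0]

section SymplecticPlane

variable {k : Type*} [CommRing k]

theorem symplecticPlane_transpose : (symplecticPlane k)ᵀ = -symplecticPlane k := by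
  ext i j; fin_cases i <;> fin_cases j <;> simp [symplecticPlane]

theorem symplecticPlane_mul_self : symplecticPlane k * symplecticPlane k = -1 := by
  ext i j; fin_cases i <;> fin_cases j <;> simp [symplecticPlane]

theorem isAlt_transpose_mul_symplecticPlane_mul {n : Type*} (B : Matrix (Fin 2) n k) :
    IsAlt (Bᵀ * symplecticPlane k * B) := by
  refine ⟨?_, fun x => ?_⟩
  · simp only [transpose_mul, transpose_transpose, symplecticPlane_transpose, Matrix.mul_assoc,
      Matrix.neg_mul, Matrix.mul_neg]
  · simp [mul_apply, Fin.sum_univ_two, symplecticPlane]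
    ring

theorem MatCongruent.smul_symplecticPlane {K : Type*} [Field K] {a : K} (ha : a ≠ 0) :
    MatCongruent (a • symplecticPlane K) (symplecticPlane K) :=
  ⟨!![1, 0; 0, a⁻¹], !![1, 0; 0, a], by simp [one_fin_two, ha], by simp [one_fin_two, ha], by
    ext i j
    fin_cases i <;> fin_cases j <;> simp [symplecticPlane, mul_apply, Fin.sum_univ_two, ha]⟩

end SymplecticPlane

theorem MatCongruent.fromBlocks_neg_transpose {k m n : Type*} [CommRing k] [Fintype m]
    [Fintype n] [DecidableEq m] [DecidableEq n] {S : Matrix m m k} [Invertible S]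
    (hS : Sᵀ = -S) (B : Matrix m n k) (D : Matrix n n k) :
    MatCongruent (fromBlocks S B (-Bᵀ) D) (dsum S (D + Bᵀ * ⅟S * B)) := by
  have hSinv : (⅟S)ᵀ = -⅟S := by
    have h : (⅟S)ᵀ * S = -1 := by
      calc (⅟S)ᵀ * S = -((⅟S)ᵀ * Sᵀ) := by rw [hS, Matrix.mul_neg, neg_neg]
        _ = -1 := by rw [← transpose_mul, mul_invOf_self, transpose_one]
    calc (⅟S)ᵀ = (⅟S)ᵀ * S * ⅟S := by rw [Matrix.mul_assoc, mul_invOf_self, Matrix.mul_one]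
      _ = -⅟S := by rw [h, Matrix.neg_mul, Matrix.one_mul]
  -- by `hSinv`, the lower factor of the LDU decomposition is the transpose of the upper one
  refine MatCongruent.symm ⟨fromBlocks 1 (⅟S * B) 0 1, fromBlocks 1 (-(⅟S * B)) 0 1,
    by simp [fromBlocks_multiply, fromBlocks_one], by simp [fromBlocks_multiply, fromBlocks_one],
    ?_⟩
  rw [fromBlocks_eq_of_invertible₁₁, fromBlocks_transpose]
  congr 2
  · rw [transpose_mul, hSinv]; simp
  · simp [dsum]

theorem Matrix.IsAlt.eq_fromBlocks {k s : Type*} [CommRing k]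
    {A : Matrix (Fin 2 ⊕ s) (Fin 2 ⊕ s) k} (hA : A.IsAlt) :
    A = fromBlocks (A (.inl 0) (.inl 1) • symplecticPlane k) A.toBlocks₁₂ (-A.toBlocks₁₂ᵀ)
      A.toBlocks₂₂ := by
  ext (i | i) (j | j)
  · fin_cases i <;> fin_cases j <;> simp [symplecticPlane, hA.apply_self, hA.apply_comm (.inl 1)]
  · rfl
  · simp [hA.apply_comm (.inr i), toBlocks₁₂]
  · rfl

theorem Matrix.IsAlt.exists_matCongruent_dsum_symplecticPlane {K s : Type*} [Field K]
    [Fintype s] [DecidableEq s] {A : Matrix (Fin 2 ⊕ s) (Fin 2 ⊕ s) K} (hA : A.IsAlt)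
    (ha : A (.inl 0) (.inl 1) ≠ 0) :
    ∃ A' : Matrix s s K, A'.IsAlt ∧ MatCongruent A (dsum (symplecticPlane K) A') := by
  set a := A (.inl 0) (.inl 1)
  set B := A.toBlocks₁₂
  let _ : Invertible (a • symplecticPlane K) :=
    ⟨-a⁻¹ • symplecticPlane K, by simp [symplecticPlane_mul_self, ha],
      by simp [symplecticPlane_mul_self, ha]⟩
  have hB : Bᵀ * ⅟(a • symplecticPlane K) * B = -a⁻¹ • (Bᵀ * symplecticPlane K * B) := by
    change Bᵀ * (-a⁻¹ • symplecticPlane K) * B = _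
    rw [Matrix.mul_smul, Matrix.smul_mul]
  refine ⟨A.toBlocks₂₂ + Bᵀ * ⅟(a • symplecticPlane K) * B, ?_, ?_⟩
  · rw [hB]
    exact (hA.submatrix Sum.inr).add (isAlt_transpose_mul_symplecticPlane_mul B |>.smul _)
  · conv_lhs => rw [hA.eq_fromBlocks]
    refine (MatCongruent.fromBlocks_neg_transpose ?_ B _).trans
      (MatCongruent.dsum_congr (MatCongruent.smul_symplecticPlane ha) (MatCongruent.refl _))
    rw [transpose_smul, symplecticPlane_transpose, smul_neg]

def Equiv.finTwoSumNe {m : Type*} [DecidableEq m] {i j : m} (hij : i ≠ j) :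
    Fin 2 ⊕ {x : m // x ≠ i ∧ x ≠ j} ≃ m where
  toFun := Sum.elim ![i, j] Subtype.val
  invFun x := if hi : x = i then .inl 0 else if hj : x = j then .inl 1 else .inr ⟨x, hi, hj⟩
  left_inv := by
    rintro (a | ⟨x, hi, hj⟩)
    · fin_cases a <;> simp [hij.symm]
    · simp [hi, hj]
  right_inv x := by
    by_cases hi : x = i
    · simp [hi]
    · by_cases hj : x = j
      · subst hj; simp [hi]
      · simp [hi, hj]

theorem Matrix.IsAlt.exists_matCongruent_normalForm {K m : Type*} [Field K] [Fintype m]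
    [DecidableEq m] {A : Matrix m m K} (hA : A.IsAlt) :
    ∃ n₁ n₂ : ℕ, MatCongruent A
      (dsum (copies n₁ (0 : Matrix (Fin 1) (Fin 1) K)) (copies n₂ (symplecticPlane K))) := by
  induction hcard : Fintype.card m using Nat.strong_induction_on generalizing m with
  | _ N ih =>
    by_cases hA0 : A = 0
    · refine ⟨Fintype.card m, 0, ?_⟩
      have hzero : dsum (copies (Fintype.card m) (0 : Matrix (Fin 1) (Fin 1) K))
          (copies 0 (symplecticPlane K)) = 0 := by
        ext (_ | ⟨_, i⟩) (_ | ⟨_, j⟩)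
        · simp [dsum, copies, blockDiagonal_apply]
        all_goals first | exact i.elim0 | exact j.elim0
      rw [hA0, hzero]
      exact MatCongruent.zero_of_card_eq (by simp)
    obtain ⟨i, j, hij⟩ : ∃ i j, A i j ≠ 0 := by
      by_contra! h
      exact hA0 (Matrix.ext h)
    have hne : i ≠ j := by
      rintro rfl
      exact hij (hA.apply_self i)
    let e := Equiv.finTwoSumNe hne
    obtain ⟨A', hA'alt, hAA'⟩ := (hA.submatrix e).exists_matCongruent_dsum_symplecticPlane hij
    have hlt : Fintype.card {x // x ≠ i ∧ x ≠ j} < N := by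
      have := Fintype.card_congr e
      simp only [Fintype.card_sum, Fintype.card_fin] at this
      omega
    obtain ⟨n₁, n₂, hA'⟩ := ih _ hlt hA'alt rfl
    exact ⟨n₁, n₂ + 1, (MatCongruent.of_submatrix A e).trans <| hAA'.trans <|
      (MatCongruent.dsum_congr (.refl _) hA').trans <| (MatCongruent.dsum_left_comm _ _ _).trans <|
        MatCongruent.dsum_congr (.refl _) (MatCongruent.dsum_copies_succ _ _)⟩

/-- Every finite simple graph can be decomposed into `K₁` and `K₂` over `𝔽₂`. -/
theorem decomposition_over_F2 (n : ℕ) (G : SimpleGraph (Fin n)) [DecidableRel G.Adj] :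
    ∃ n₁ n₂ : ℕ,
      MatCongruent (G.adjMatrix (ZMod 2))
        (dsum (copies n₁ (0 : Matrix (Fin 1) (Fin 1) (ZMod 2)))
          (copies n₂ (Kmat (ZMod 2) 2))) := by
  have hK₂ : Kmat (ZMod 2) 2 = symplecticPlane (ZMod 2) := by decide
  rw [hK₂]
  exact G.isAlt_adjMatrix.exists_matCongruent_normalForm
end

section
/- The set of nonzero values of the determinant (over ℤ) of the adjacency matrix of a finite simple graph on 4 vertices equals {−3, 1}. -/
/-!
For a symmetric 4 × 4 matrix with zero diagonal only the fixed-point-free permutations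
contribute to the determinant: the three double transpositions give `+p²`, `+q²`, `+r²`, where
`p, q, r` are the edge products of the three perfect matchings of `K₄`, and the six 4-cycles
give `-2pq`, `-2qr`, `-2rp`. For a graph, `p, q, r ∈ {0, 1}`, so if `m` of the three
matchings lie in the graph the determinant is `m - m(m - 1) = m(2 - m) ∈ {0, 1, 0, -3}`.
The values `-3` and `1` are attained by `K₄` and by a perfect matching.
-/

/-- `𝒢 n` is the set of nonzero integers arising as the determinant of the adjacency
matrix of a simple graph on `n` vertices. -/
def detSet (n : ℕ) : Set ℤ :=
  {d : ℤ | d ≠ 0 ∧ ∃ (G : SimpleGraph (Fin n)) (inst : DecidableRel G.Adj),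
    (@SimpleGraph.adjMatrix ℤ (Fin n) G inst _ _).det = d}

open Matrix SimpleGraph

theorem Matrix.det_fin_four_of_isSymm {R : Type*} [CommRing R] {A : Matrix (Fin 4) (Fin 4) R}
    (hA : A.IsSymm) (hdiag : ∀ i, A i i = 0) :
    A.det = (A 0 1 * A 2 3) ^ 2 + (A 0 2 * A 1 3) ^ 2 + (A 0 3 * A 1 2) ^ 2
      - 2 * (A 0 1 * A 2 3 * (A 0 2 * A 1 3) + A 0 2 * A 1 3 * (A 0 3 * A 1 2)
        + A 0 3 * A 1 2 * (A 0 1 * A 2 3)) := by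
  rw [det_succ_row_zero]
  simp [Fin.sum_univ_succ, det_fin_three, Fin.succAbove, hdiag,
    hA.apply 0 1, hA.apply 0 2, hA.apply 0 3, hA.apply 1 2, hA.apply 1 3, hA.apply 2 3]
  ring

lemma mul_eq_zero_or_one {R : Type*} [MulZeroOneClass R] {a b : R}
    (ha : a = 0 ∨ a = 1) (hb : b = 0 ∨ b = 1) : a * b = 0 ∨ a * b = 1 := by
  rcases ha with rfl | rfl <;> simp [hb]

lemma sq_add_sq_add_sq_sub_mem_of_zero_or_one {R : Type*} [CommRing R] {p q r : R}
    (hp : p = 0 ∨ p = 1) (hq : q = 0 ∨ q = 1) (hr : r = 0 ∨ r = 1) :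
    p ^ 2 + q ^ 2 + r ^ 2 - 2 * (p * q + q * r + r * p) ∈ ({0, 1, -3} : Set R) := by
  rcases hp with rfl | rfl <;> rcases hq with rfl | rfl <;> rcases hr with rfl | rfl <;>
    norm_num

theorem Matrix.IsAdjMatrix.det_mem_of_fin_four {R : Type*} [CommRing R]
    {A : Matrix (Fin 4) (Fin 4) R} (hA : A.IsAdjMatrix) : A.det ∈ ({0, 1, -3} : Set R) := by
  have h01 := hA.zero_or_one
  rw [det_fin_four_of_isSymm hA.symm hA.apply_diag]
  exact sq_add_sq_add_sq_sub_mem_of_zero_or_one (mul_eq_zero_or_one (h01 0 1) (h01 2 3))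
    (mul_eq_zero_or_one (h01 0 2) (h01 1 3)) (mul_eq_zero_or_one (h01 0 3) (h01 1 2))

theorem det_adjMatrix_top_fin_four : ((⊤ : SimpleGraph (Fin 4)).adjMatrix ℤ).det = -3 := by
  rw [det_fin_four_of_isSymm (isSymm_adjMatrix _) (by simp)]
  simp [adjMatrix_apply]

open Classical in
theorem det_adjMatrix_perfectMatching_fin_four :
    ((fromEdgeSet {s(0, 1), s(2, 3)} : SimpleGraph (Fin 4)).adjMatrix ℤ).det = 1 := by
  rw [det_fin_four_of_isSymm (isSymm_adjMatrix _) (by simp)]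
  simp [adjMatrix_apply]

/-- `𝒢₄ = {-3, 1}`. -/
theorem detSet_four : detSet 4 = {-3, 1} := by
  ext d
  constructor
  · rintro ⟨hd, G, _, rfl⟩
    rcases (G.isAdjMatrix_adjMatrix ℤ).det_mem_of_fin_four with h | h | h
    · exact absurd h hd
    · exact Or.inr h
    · exact Or.inl h
  · rintro (rfl | rfl)
    · exact ⟨by norm_num, ⊤, inferInstance, det_adjMatrix_top_fin_four⟩
    · classical
      exact ⟨one_ne_zero, _, inferInstance, det_adjMatrix_perfectMatching_fin_four⟩
end

section
/- Let k be a field and let X be a finite simple graph on n ≥ 1 vertices whose adjacency matrix A(X), with entries read in k, has determinant 0 over k. Then there exists a vertex v of X and an invertible n×n matrix P over k such that Pᵀ · A(X) · P equals the block-diagonal direct sum of the 1×1 zero matrix and the adjacency matrix (with entries in k) of the induced subgraph X ∖ v obtained by deleting the vertex v. -/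
open Matrix

/-- Congruence ("similarity" in the paper) of square matrices over possibly different
(finite) index types: `N = Pᵀ * M * P` for some invertible `P`. -/
def CongruentMat {k : Type*} [CommRing k] {m n : Type*} [Fintype m] [Fintype n]
    [DecidableEq m] [DecidableEq n] (M : Matrix m m k) (N : Matrix n n k) : Prop :=
  ∃ (P : Matrix m n k) (Q : Matrix n m k), P * Q = 1 ∧ Q * P = 1 ∧ N = Pᵀ * M * P

instance induceDecidableRel {n : ℕ} (G : SimpleGraph (Fin n)) [inst : DecidableRel G.Adj]
    (v : Fin n) : DecidableRel ((G.induce {u | u ≠ v}).Adj) :=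
  fun a b => inst a.1 b.1

/-!
Take a kernel vector `y` of `A = A(X)` with `y v = 1`. Replacing the standard basis vector `e_v`
by `y` gives a new basis, and in it the symmetric form `A` has Gram matrix `0 ⊕ A'`: the
row and column of `y` vanish because `A y = 0` and `A` is symmetric, and `A'` is the principal
submatrix of `A` off `v`, i.e. the adjacency matrix of `X ∖ v`.
-/

theorem Matrix.mul_apply_eq_dotProduct_transpose {α l m n : Type*} [Mul α] [AddCommMonoid α]
    [Fintype m] (M : Matrix l m α) (N : Matrix m n α) (i : l) (j : n) :
    (M * N) i j = M i ⬝ᵥ Nᵀ j :=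
  rfl

theorem Matrix.transpose_mul_mul_apply {α m n : Type*} [NonUnitalSemiring α] [Fintype m]
    (A : Matrix m m α) (P : Matrix m n α) (i j : n) :
    (Pᵀ * A * P) i j = Pᵀ i ⬝ᵥ (A *ᵥ Pᵀ j) := by
  rw [Matrix.mul_assoc]
  rfl

theorem congruentMat_transpose_mul_mul_of_mul_eq_one {k m n : Type*} [CommRing k] [Fintype m]
    [Fintype n] [DecidableEq m] [DecidableEq n] (hcard : Fintype.card m = Fintype.card n)
    (M : Matrix m m k) {P : Matrix m n k} {Q : Matrix n m k} (hQP : Q * P = 1) :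
    CongruentMat M (Pᵀ * M * P) :=
  ⟨P, Q, (mul_eq_one_comm_of_card_eq _ _ _ hcard).2 hQP, hQP, rfl⟩

theorem card_fin_one_sum_subtype_ne {m : Type*} [Fintype m] [DecidableEq m] (v : m) :
    Fintype.card (Fin 1 ⊕ {u // u ≠ v}) = Fintype.card m := by
  have := Fintype.card_pos_iff.2 ⟨v⟩
  simp only [Fintype.card_sum, Fintype.card_subtype_compl, Fintype.card_unique]
  omega

section ReplaceBasis

variable {k : Type*} [CommRing k] {m : Type*} [DecidableEq m]

def replaceBasisMatrix (y : m → k) (v : m) : Matrix m (Fin 1 ⊕ {u // u ≠ v}) k :=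
  (Matrix.of <| Sum.elim (fun _ => y) fun u => Pi.single (u : m) 1)ᵀ

def replaceBasisMatrixInv (y : m → k) (v : m) : Matrix (Fin 1 ⊕ {u // u ≠ v}) m k :=
  Matrix.of <| Sum.elim (fun _ => Pi.single v 1) fun u => Pi.single (u : m) 1 - y u • Pi.single v 1

@[simp]
theorem replaceBasisMatrix_transpose_inl (y : m → k) (v : m) (c : Fin 1) :
    (replaceBasisMatrix y v)ᵀ (.inl c) = y :=
  rfl

@[simp]
theorem replaceBasisMatrix_transpose_inr (y : m → k) (v : m) (u : {u // u ≠ v}) :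
    (replaceBasisMatrix y v)ᵀ (.inr u) = Pi.single (u : m) 1 :=
  rfl

@[simp]
theorem replaceBasisMatrixInv_inl (y : m → k) (v : m) (c : Fin 1) :
    replaceBasisMatrixInv y v (.inl c) = Pi.single v 1 :=
  rfl

@[simp]
theorem replaceBasisMatrixInv_inr (y : m → k) (v : m) (u : {u // u ≠ v}) :
    replaceBasisMatrixInv y v (.inr u) = Pi.single (u : m) 1 - y u • Pi.single v 1 :=
  rfl

variable [Fintype m]

theorem replaceBasisMatrixInv_mul_replaceBasisMatrix {y : m → k} {v : m} (hyv : y v = 1) :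
    replaceBasisMatrixInv y v * replaceBasisMatrix y v = 1 := by
  ext (c | u) (d | w) <;> simp only [Matrix.mul_apply_eq_dotProduct_transpose,
    replaceBasisMatrixInv_inl, replaceBasisMatrixInv_inr, replaceBasisMatrix_transpose_inl,
    replaceBasisMatrix_transpose_inr]
  · obtain rfl := Subsingleton.elim c d
    simp [hyv]
  · simp [Pi.single_eq_of_ne w.2]
  · simp [hyv]
  · simp [Pi.single_eq_of_ne w.2, Pi.single_apply, Matrix.one_apply, Subtype.ext_iff, eq_comm]

theorem congruentMat_dsum_zero_submatrix_of_mulVec_eq_zero {A : Matrix m m k} (hA : A.IsSymm)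
    {y : m → k} {v : m} (hAy : A *ᵥ y = 0) (hyv : y v = 1) :
    CongruentMat A
      (dsum (0 : Matrix (Fin 1) (Fin 1) k) (A.submatrix ((↑) : {u // u ≠ v} → m) (↑))) := by
  have hyA : ∀ w, y ⬝ᵥ A.col w = 0 :=
    congrFun (show y ᵥ* A = 0 by rw [← mulVec_transpose, hA.eq, hAy])
  convert congruentMat_transpose_mul_mul_of_mul_eq_one (card_fin_one_sum_subtype_ne v).symm A
    (replaceBasisMatrixInv_mul_replaceBasisMatrix hyv) using 1
  ext (c | u) (d | w) <;> simp [Matrix.transpose_mul_mul_apply, dsum, hAy, hyA]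

end ReplaceBasis

theorem deleteVertex_of_det_eq_zero_general (k : Type*) [Field k] (n : ℕ)
    (G : SimpleGraph (Fin n)) [DecidableRel G.Adj]
    (hdet : (G.adjMatrix k).det = 0) :
    ∃ v : Fin n,
      CongruentMat (G.adjMatrix k)
        (dsum (0 : Matrix (Fin 1) (Fin 1) k)
          ((G.induce {u | u ≠ v}).adjMatrix k)) := by
  obtain ⟨x, hx0, hAx⟩ := Matrix.exists_mulVec_eq_zero_iff.2 hdet
  obtain ⟨v, hv⟩ := Function.ne_iff.1 hx0
  refine ⟨v, ?_⟩
  rw [← (SimpleGraph.Embedding.induce _).submatrix_adjMatrix k]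
  refine congruentMat_dsum_zero_submatrix_of_mulVec_eq_zero G.isSymm_adjMatrix
    (y := (x v)⁻¹ • x) ?_ (inv_mul_cancel₀ hv)
  rw [Matrix.mulVec_smul, hAx, smul_zero]

/-- If the adjacency matrix of a graph `X` on `n ≥ 1` vertices has determinant `0` over a
field `k`, then there is a vertex `v` with `X ∼ K₁ ⊕ (X \ v)` over `k`. -/
theorem deleteVertex_of_det_eq_zero (k : Type*) [Field k] (n : ℕ) (hn : 1 ≤ n)
    (G : SimpleGraph (Fin n)) [DecidableRel G.Adj]
    (hdet : (G.adjMatrix k).det = 0) :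
    ∃ v : Fin n,
      CongruentMat (G.adjMatrix k)
        (dsum (0 : Matrix (Fin 1) (Fin 1) k)
          ((G.induce {u | u ≠ v}).adjMatrix k)) :=
  deleteVertex_of_det_eq_zero_general k n G hdet
end

section
/- Let p be a prime and let x be a nonzero element of ZMod p. Then the 2×2 identity matrix I₂ and the matrix x·I₂ are congruent over ZMod p; that is, there exists an invertible 2×2 matrix P over ZMod p such that Pᵀ · P = x·I₂. -/
/-!
Every element `x` of `𝔽_p` is a sum of two squares `a² + b²`, and the matrix of multiplication
by `a + b i` satisfies `Pᵀ P = (a² + b²) I₂` and `det P = a² + b²`, so it is invertible when `x ≠ 0`.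
-/

open Matrix

section SumOfTwoSquares

variable {R : Type*} [CommRing R]

theorem transpose_mul_self_of_sq_add_sq (a b : R) :
    !![a, b; -b, a]ᵀ * !![a, b; -b, a] = (a ^ 2 + b ^ 2) • (1 : Matrix (Fin 2) (Fin 2) R) := by
  ext i j
  fin_cases i <;> fin_cases j <;> simp [mul_apply, Fin.sum_univ_two] <;> ring

theorem det_of_sq_add_sq (a b : R) : !![a, b; -b, a].det = a ^ 2 + b ^ 2 := by
  simp only [det_fin_two_of]
  ring

theorem exists_isUnit_transpose_mul_self_eq_smul_one {K : Type*} [Field K] {x : K} (hx : x ≠ 0)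
    {a b : K} (hab : a ^ 2 + b ^ 2 = x) :
    ∃ P : Matrix (Fin 2) (Fin 2) K, IsUnit P ∧ Pᵀ * P = x • (1 : Matrix (Fin 2) (Fin 2) K) :=
  ⟨!![a, b; -b, a],
    (isUnit_iff_isUnit_det _).mpr (by rw [det_of_sq_add_sq, hab]; exact hx.isUnit),
    by rw [transpose_mul_self_of_sq_add_sq, hab]⟩

end SumOfTwoSquares

/-- For a prime `p` and any nonzero `x` in `ZMod p`, the identity matrix `I₂` is
congruent over `ZMod p` to `x • I₂`: there is an invertible `P` with `Pᵀ * P = x • I₂`. -/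
theorem identity_congruent_smul (p : ℕ) (hp : p.Prime) (x : ZMod p) (hx : x ≠ 0) :
    ∃ P : Matrix (Fin 2) (Fin 2) (ZMod p),
      IsUnit P ∧ Pᵀ * (1 : Matrix (Fin 2) (Fin 2) (ZMod p)) * P =
        x • (1 : Matrix (Fin 2) (Fin 2) (ZMod p)) := by
  have : Fact p.Prime := ⟨hp⟩
  obtain ⟨a, b, hab⟩ := ZMod.sq_add_sq p x
  simpa only [Matrix.mul_one] using exists_isUnit_transpose_mul_self_eq_smul_one hx hab
end

section
/- For every integer n, there exists a finite simple graph G whose adjacency matrix has determinant equal to n over ℤ. -/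
/-!
The complete graph `K_{k+1}` has adjacency matrix `J - I`, whose determinant is `(-1)^k k`; this
already gives `n` or `-n` for `k = |n|`. Adding a disjoint `K_2`, whose determinant is `-1`, flips
the sign, because the adjacency matrix of a disjoint union is block diagonal.
-/

open Matrix

namespace SimpleGraph

variable {R : Type*} [CommRing R] {V W : Type*}

theorem Iso.det_adjMatrix_eq [Fintype V] [Fintype W] [DecidableEq V] [DecidableEq W]
    {G : SimpleGraph V} {H : SimpleGraph W} [DecidableRel G.Adj] [DecidableRel H.Adj] (f : G ≃g H) : (G.adjMatrix R).det = (H.adjMatrix R).det := by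
  rw [← f.reindex_adjMatrix R, det_reindex_self]

theorem adjMatrix_sum (G : SimpleGraph V) (H : SimpleGraph W) [DecidableRel G.Adj]
    [DecidableRel H.Adj] [DecidableRel (G ⊕g H).Adj] :
    (G ⊕g H).adjMatrix R = fromBlocks (G.adjMatrix R) 0 0 (H.adjMatrix R) := by
  ext (v | w) (v' | w') <;> simp

theorem det_adjMatrix_sum [Fintype V] [Fintype W] [DecidableEq V] [DecidableEq W]
    (G : SimpleGraph V) (H : SimpleGraph W) [DecidableRel G.Adj] [DecidableRel H.Adj]
    [DecidableRel (G ⊕g H).Adj] :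
    ((G ⊕g H).adjMatrix R).det = (G.adjMatrix R).det * (H.adjMatrix R).det := by
  rw [adjMatrix_sum, det_fromBlocks_zero₂₁]

theorem det_adjMatrix_top [Fintype V] [DecidableEq V] :
    ((⊤ : SimpleGraph V).adjMatrix R).det =
      (-1) ^ (Fintype.card V + 1) * (Fintype.card V - 1) := by
  have hJ : (⊤ : SimpleGraph V).adjMatrix R =
      -(1 - replicateCol Unit (1 : V → R) * replicateRow Unit (1 : V → R)) := by
    ext i j
    by_cases hij : i = j <;> simp [one_apply, mul_apply, hij]
  rw [hJ, det_neg, det_one_sub_mul_comm, replicateRow_mul_replicateCol]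
  simp only [one_dotProduct_one, det_unique, PUnit.default_eq_unit, Matrix.sub_apply,
    one_apply_eq, of_apply, pow_succ, mul_neg, mul_one, neg_mul]
  ring

theorem exists_fin_det_adjMatrix_eq [Fintype V] [DecidableEq V] (G : SimpleGraph V)
    [DecidableRel G.Adj] :
    ∃ (H : SimpleGraph (Fin (Fintype.card V))) (_ : DecidableRel H.Adj),
      (H.adjMatrix R).det = (G.adjMatrix R).det := by
  classical
  exact ⟨G.overFin rfl, inferInstance, (G.overFinIso rfl).det_adjMatrix_eq.symm⟩

end SimpleGraph

open SimpleGraph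

/-- For every integer `n` there is a finite simple graph whose adjacency matrix has
determinant `n` over `ℤ`. -/
theorem exists_graph_with_det (n : ℤ) :
    ∃ (m : ℕ) (G : SimpleGraph (Fin m)) (inst : DecidableRel G.Adj),
      (@SimpleGraph.adjMatrix ℤ (Fin m) G inst _ _).det = n := by
  classical
  set k := n.natAbs with hk
  have hK : ((⊤ : SimpleGraph (Fin (k + 1))).adjMatrix ℤ).det = (-1) ^ k * k := by
    rw [det_adjMatrix_top, Fintype.card_fin]
    push_cast
    ring
  have hK₂ : ((⊤ : SimpleGraph (Fin 2)).adjMatrix ℤ).det = -1 := by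
    rw [det_adjMatrix_top, Fintype.card_fin]
    norm_num
  obtain h | h : n = (-1) ^ k * k ∨ n = -((-1) ^ k * k) := by
    rcases neg_one_pow_eq_or ℤ k with hsign | hsign <;> rw [hsign] <;> omega
  · exact ⟨k + 1, ⊤, inferInstance, hK.trans h.symm⟩
  · obtain ⟨G, inst, hG⟩ := exists_fin_det_adjMatrix_eq (R := ℤ)
      ((⊤ : SimpleGraph (Fin (k + 1))) ⊕g (⊤ : SimpleGraph (Fin 2)))
    refine ⟨_, G, inst, ?_⟩
    rw [hG, det_adjMatrix_sum, hK, hK₂, h]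
    ring
end
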